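/- arXiv:math/0609429 — 4 statements merged into one kernel-verified Lean document; each statement's English description precedes it below -/
import Mathlib

section
/- Suppose F is analytic on the open right half-plane ℂ₊ = {z : Re z > 0}, and for constants A, B, γ > 0 and a ≥ 0 one has |F(z)| ≤ B for all z ∈ ℂ₊, and |F(t)| ≤ A·e^{at}·e^{-γ/t} for all real t > 0. Then |F(z)| ≤ B·exp(-Re(γ/z)) for all z ∈ ℂ₊. -/
/-!
Substituting `w = 1 / z`, the function `G w = F w⁻¹` is bounded by `B` on the right half-plane and
is `O(e^{-γx})` on the positive real axis, because the factor `A e^{a/x}` stays bounded as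
`x → ∞`. Hence `e^{γw} G(w)` is bounded on the real axis, has exponential growth of order one, and
is bounded by `B` on the imaginary axis, so the Phragmén–Lindelöf principle bounds it by `B`
throughout. Since `G` need not extend continuously to the imaginary axis, this is applied to
`G (w + δ)`, and then `δ → 0`.
-/

open Filter Complex Asymptotics Bornology Topology

section

variable {E : Type*} [NormedAddCommGroup E] [NormedSpace ℂ E] {G : ℂ → E} {B γ : ℝ}

theorem isBigO_exp_mul_smul_of_norm_le {s : Set ℂ} (hG : ∀ w ∈ s, ‖G w‖ ≤ B) :
    (fun w => exp (γ * w) • G w) =O[cobounded ℂ ⊓ 𝓟 s]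
      fun w => Real.exp (|γ| * ‖w‖ ^ (1 : ℝ)) := by
  have hexp : (fun w : ℂ => exp (γ * w)) =O[cobounded ℂ ⊓ 𝓟 s]
      fun w => Real.exp (|γ| * ‖w‖ ^ (1 : ℝ)) := by
    refine .of_bound 1 (Eventually.of_forall fun w => ?_)
    rw [norm_exp, Real.rpow_one, Real.norm_of_nonneg (Real.exp_nonneg _), one_mul, re_ofReal_mul]
    exact Real.exp_le_exp.2 ((le_abs_self _).trans
      (by rw [abs_mul]; exact mul_le_mul_of_nonneg_left (abs_re_le_norm w) (abs_nonneg γ)))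
  have hbdd : G =O[cobounded ℂ ⊓ 𝓟 s] fun _ => (1 : ℝ) :=
    .of_bound B (eventually_inf_principal.2 (.of_forall fun w hw => by simpa using hG w hw))
  simpa using hexp.smul hbdd

theorem norm_le_mul_exp_neg_re_of_diffContOnCl (hd : DiffContOnCl ℂ G {w | 0 < w.re})
    (hG : ∀ w : ℂ, 0 ≤ w.re → ‖G w‖ ≤ B)
    (hre : (fun x : ℝ => G x) =O[atTop] fun x => Real.exp (-(γ * x)))
    {w : ℂ} (hw : 0 ≤ w.re) : ‖G w‖ ≤ B * Real.exp (-(γ * w.re)) := by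
  have hnorm : ∀ w : ℂ, ‖exp (γ * w) • G w‖ = ‖G w‖ * Real.exp (γ * w.re) := fun w => by
    rw [norm_smul, norm_exp, re_ofReal_mul, mul_comm]
  have hd' : DiffContOnCl ℂ (fun w => exp (γ * w) • G w) {w | 0 < w.re} :=
    (differentiable_exp.comp (differentiable_id.const_mul _)).diffContOnCl.smul hd
  have hre' : IsBoundedUnder (· ≤ ·) atTop fun x : ℝ => ‖exp (γ * x) • G x‖ := by
    obtain ⟨C, hC⟩ := hre.bound
    refine ⟨C, eventually_map.2 ?_⟩
    filter_upwards [hC] with x hx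
    rw [hnorm, ofReal_re, ← le_div_iff₀ (Real.exp_pos _), div_eq_mul_inv, ← Real.exp_neg]
    simpa only [Real.norm_of_nonneg (Real.exp_nonneg _)] using hx
  have hPL : ‖exp (γ * w) • G w‖ ≤ B := by
    refine PhragmenLindelof.right_half_plane_of_bounded_on_real hd'
      ⟨1, one_lt_two, |γ|, isBigO_exp_mul_smul_of_norm_le fun w hw => hG w hw.le⟩
      hre' (fun y => ?_) hw
    simpa [hnorm] using hG (y * I) (by simp)
  rw [hnorm, ← le_div_iff₀ (Real.exp_pos _)] at hPL
  rwa [Real.exp_neg, ← div_eq_mul_inv]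

theorem norm_le_mul_exp_neg_re_of_differentiableOn (hd : DifferentiableOn ℂ G {w | 0 < w.re})
    (hG : ∀ w : ℂ, 0 < w.re → ‖G w‖ ≤ B)
    (hre : (fun x : ℝ => G x) =O[atTop] fun x => Real.exp (-(γ * x)))
    {w : ℂ} (hw : 0 < w.re) : ‖G w‖ ≤ B * Real.exp (-(γ * w.re)) := by
  have hshift : ∀ δ : ℝ, 0 < δ → ∀ v : ℂ, 0 ≤ v.re → 0 < (v + δ).re := fun δ hδ v hv => by
    simpa using add_pos_of_nonneg_of_pos hv hδ
  -- Shifting by `δ` makes `G` continuous up to the imaginary axis.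
  have hδ_bound : ∀ δ ∈ Set.Ioo 0 w.re, ‖G w‖ ≤ B * Real.exp (-(γ * (w.re - δ))) := by
    rintro δ ⟨hδ, hδw⟩
    have hd' : DiffContOnCl ℂ (fun v => G (v + δ)) {v | 0 < v.re} := by
      refine DifferentiableOn.diffContOnCl ?_
      rw [closure_setOfPred_lt_re]
      exact hd.comp (differentiableOn_id.add_const _) (hshift δ hδ)
    have hre' : (fun x : ℝ => G (x + δ)) =O[atTop] fun x => Real.exp (-(γ * x)) := by
      have h := hre.comp_tendsto (tendsto_atTop_add_const_right _ δ tendsto_id)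
      refine (h.congr_left fun x => by simp).trans
        (.of_bound (Real.exp (-(γ * δ))) (.of_forall fun x => le_of_eq ?_))
      simp only [Function.comp_apply, id, Real.norm_of_nonneg (Real.exp_nonneg _), ← Real.exp_add]
      ring_nf
    simpa using norm_le_mul_exp_neg_re_of_diffContOnCl hd' (fun v hv => hG _ (hshift δ hδ v hv))
      hre' (w := w - δ) (by simpa using hδw.le)
  have hlim : Tendsto (fun δ => B * Real.exp (-(γ * (w.re - δ)))) (𝓝[>] 0)
      (𝓝 (B * Real.exp (-(γ * w.re)))) :=
    (Continuous.tendsto' (by fun_prop) _ _ (by simp)).mono_left nhdsWithin_le_nhds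
  exact ge_of_tendsto hlim (mem_of_superset (Ioo_mem_nhdsGT hw) hδ_bound)

theorem Complex.re_inv_pos {z : ℂ} (hz : 0 < z.re) : 0 < z⁻¹.re := by
  rw [inv_re]
  exact div_pos hz (normSq_pos.2 fun h => by simp [h] at hz)

theorem phragmen_lindelof_halfplane_gaussian_general
    (F : ℂ → ℂ) (A B γ a : ℝ)
    (hF : DifferentiableOn ℂ F {z : ℂ | 0 < z.re})
    (hbound : ∀ z : ℂ, 0 < z.re → ‖F z‖ ≤ B)
    (hreal : ∀ t : ℝ, 0 < t → ‖F t‖ ≤ A * Real.exp (a * t) * Real.exp (-γ / t)) :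
    ∀ z : ℂ, 0 < z.re → ‖F z‖ ≤ B * Real.exp (-(((γ : ℂ) / z).re)) := by
  have hd : DifferentiableOn ℂ (fun w => F w⁻¹) {w | 0 < w.re} :=
    hF.comp (differentiableOn_id.inv fun w hw h => by simp [h] at hw) fun w => re_inv_pos
  have hlim : Tendsto (fun x : ℝ => A * Real.exp (a * x⁻¹)) atTop (𝓝 A) := by
    simpa using (tendsto_inv_atTop_zero.const_mul a).rexp.const_mul A
  have hre : (fun x : ℝ => F (x : ℂ)⁻¹) =O[atTop] fun x => Real.exp (-(γ * x)) := by
    have hO := (hlim.isBigO_one ℝ).mul (isBigO_refl (fun x => Real.exp (-(γ * x))) atTop)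
    refine (IsBigO.of_bound' ?_).trans (hO.congr_right fun x => one_mul _)
    filter_upwards [eventually_gt_atTop 0] with x hx
    have h := hreal x⁻¹ (inv_pos.2 hx)
    rw [div_inv_eq_mul, neg_mul, ofReal_inv] at h
    exact h.trans (le_abs_self _)
  intro z hz
  simpa [div_eq_mul_inv, re_ofReal_mul] using
    norm_le_mul_exp_neg_re_of_differentiableOn hd (fun w hw => hbound _ (re_inv_pos hw)) hre
      (re_inv_pos hz)

/-- If `F` is analytic on the open right half-plane `ℂ₊ = {z : Re z > 0}`, bounded by `B`
on `ℂ₊`, and satisfies `|F(t)| ≤ A·e^{at}·e^{-γ/t}` on the positive real axis, then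
`|F(z)| ≤ B·exp(-Re(γ/z))` on all of `ℂ₊`.  (The bound depends only on `B` and `γ`.) -/
theorem phragmen_lindelof_halfplane_gaussian
    (F : ℂ → ℂ) (A B γ a : ℝ)
    (hA : 0 < A) (hB : 0 < B) (hγ : 0 < γ) (ha : 0 ≤ a)
    (hF : DifferentiableOn ℂ F {z : ℂ | 0 < z.re})
    (hbound : ∀ z : ℂ, 0 < z.re → ‖F z‖ ≤ B)
    (hreal : ∀ t : ℝ, 0 < t → ‖F t‖ ≤ A * Real.exp (a * t) * Real.exp (-γ / t)) :
    ∀ z : ℂ, 0 < z.re → ‖F z‖ ≤ B * Real.exp (-(((γ : ℂ) / z).re)) :=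
  phragmen_lindelof_halfplane_gaussian_general F A B γ a hF hbound hreal
end
end

section
/- Let F be analytic on ℂ₊ and let A, B, γ, ν > 0. Assume: (i) |F(z)| ≤ A for all z ∈ ℂ₊; (ii) |F(t)| ≤ A·e^{-γ/t} for all real t with 0 < t ≤ γ; (iii) |F(z)| ≤ B·((Re z)/(4γ))^{-ν/2} for all z in the disk 𝒞_γ = {z ∈ ℂ \ {0} : Re(γ/z) ≥ 1}. Then |F(z)| ≤ e·B·(2γ/|z|)^ν·exp(-Re(γ/z)) for all z ∈ 𝒞_γ. -/
/-!
Substituting `w = γ / z` maps `𝒞_γ` onto the half-plane `Re w ≥ 1` and the segment `(0, γ]` onto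
the ray `[1, ∞)`. On that half-plane consider `G(w) = F(γ/w) e^w (2w)^{-ν}`. On the ray, the
factor `e^w` exactly cancels the decay `e^{-w}` of (ii), so `|G| ≤ A`; on the line `Re w = 1` we
have `Re(γ/w)/(4γ) = |2w|^{-2}`, so (iii) reads `|F(γ/w)| ≤ B |2w|^ν` and `|G| ≤ e B`; and (i)
gives `|G(w)| ≤ A e^{Re w}`, well within the order-two growth allowed by Phragmén–Lindelöf.
Hence `|G| ≤ e B` on the whole half-plane, which is the claim after undoing the substitution.
-/

open Complex Filter

namespace PhragmenLindelofDisk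

noncomputable def diskTransform (F : ℂ → ℂ) (γ ν : ℝ) (w : ℂ) : ℂ :=
  F (γ / w) * exp w * (2 * w) ^ (-ν : ℂ)

variable {F : ℂ → ℂ} {γ ν : ℝ}

theorem re_ofReal_div (w : ℂ) : ((γ : ℂ) / w).re = γ * w.re / normSq w := by
  rw [div_eq_mul_inv, re_ofReal_mul, inv_re, mul_div_assoc]

theorem re_ofReal_div_pos (hγ : 0 < γ) {w : ℂ} (hw : 0 < w.re) : 0 < ((γ : ℂ) / w).re := by
  have : 0 < normSq w := normSq_pos.2 fun h ↦ by simp [h] at hw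
  rw [re_ofReal_div]
  positivity

theorem norm_diskTransform (w : ℂ) :
    ‖diskTransform F γ ν w‖ = ‖F (γ / w)‖ * Real.exp w.re * ‖2 * w‖ ^ (-ν) := by
  rw [diskTransform, norm_mul, norm_mul, norm_exp, ← ofReal_neg, norm_cpow_real]

theorem norm_diskTransform_le (hν : 0 ≤ ν) {w : ℂ} (hw : 1 ≤ w.re) :
    ‖diskTransform F γ ν w‖ ≤ ‖F (γ / w)‖ * Real.exp w.re := by
  have h2w : 1 ≤ ‖2 * w‖ := by
    calc (1 : ℝ) ≤ (2 * w).re := by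
          simp only [mul_re, re_ofNat, im_ofNat, zero_mul, sub_zero]; linarith
      _ ≤ ‖2 * w‖ := re_le_norm _
  rw [norm_diskTransform]
  exact mul_le_of_le_one_right (by positivity)
    (Real.rpow_le_one_of_one_le_of_nonpos h2w (neg_nonpos.2 hν))

theorem differentiableOn_diskTransform (hγ : 0 < γ) (hF : DifferentiableOn ℂ F {z | 0 < z.re}) :
    DifferentiableOn ℂ (diskTransform F γ ν) {w | 0 < w.re} := by
  intro w (hw : 0 < w.re)
  have hw0 : w ≠ 0 := fun h ↦ by simp [h] at hw
  have hFw : DifferentiableAt ℂ F (γ / w) :=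
    hF.differentiableAt <| (isOpen_lt continuous_const continuous_re).mem_nhds <|
      re_ofReal_div_pos hγ hw
  have hslit : 2 * w ∈ slitPlane := mem_slitPlane_iff.2 <| Or.inl <| by simpa using hw
  refine DifferentiableAt.differentiableWithinAt ?_
  unfold diskTransform
  have hinv : DifferentiableAt ℂ (fun w : ℂ ↦ (γ : ℂ) / w) w :=
    (differentiableAt_const _).div differentiableAt_id hw0
  exact ((hFw.comp w hinv).mul differentiableAt_id.cexp).mul
    ((differentiableAt_id.const_mul 2).cpow (differentiableAt_const _) hslit)

theorem norm_diskTransform_ofReal_le {A : ℝ} (hγ : 0 < γ) (hν : 0 ≤ ν)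
    (h2 : ∀ t : ℝ, 0 < t → t ≤ γ → ‖F t‖ ≤ A * Real.exp (-γ / t)) {x : ℝ} (hx : 1 ≤ x) :
    ‖diskTransform F γ ν x‖ ≤ A := by
  have hx0 : 0 < x := by linarith
  have hFx : ‖F (γ / x : ℝ)‖ ≤ A * Real.exp (-x) := by
    have hγx : -γ / (γ / x) = -x := by field_simp
    simpa [hγx] using h2 (γ / x) (by positivity) (div_le_self hγ.le hx)
  calc ‖diskTransform F γ ν x‖ ≤ ‖F (γ / x : ℝ)‖ * Real.exp x := by
        simpa using norm_diskTransform_le (F := F) (γ := γ) hν (w := x) (by simpa using hx)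
    _ ≤ A * Real.exp (-x) * Real.exp x := by gcongr
    _ = A := by rw [mul_assoc, ← Real.exp_add, neg_add_cancel, Real.exp_zero, mul_one]

theorem inv_sq_rpow_neg_half {x : ℝ} (hx : 0 ≤ x) (ν : ℝ) : ((x ^ 2)⁻¹) ^ (-(ν / 2)) = x ^ ν := by
  rw [Real.inv_rpow (by positivity), Real.rpow_neg (by positivity), inv_inv,
    ← Real.rpow_natCast, ← Real.rpow_mul hx]
  congr 1
  ring

theorem norm_diskTransform_le_of_re_eq_one {B : ℝ} (hγ : 0 < γ)
    (h3 : ∀ z : ℂ, z ≠ 0 → 1 ≤ ((γ : ℂ) / z).re → ‖F z‖ ≤ B * (z.re / (4 * γ)) ^ (-(ν / 2)))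
    {w : ℂ} (hw : w.re = 1) : ‖diskTransform F γ ν w‖ ≤ Real.exp 1 * B := by
  have hw0 : w ≠ 0 := fun h ↦ by simp [h] at hw
  have hγ0 : (γ : ℂ) ≠ 0 := ofReal_ne_zero.2 hγ.ne'
  have h2w : 0 < ‖2 * w‖ := norm_pos_iff.2 (mul_ne_zero two_ne_zero hw0)
  have hbase : ((γ : ℂ) / w).re / (4 * γ) = (‖2 * w‖ ^ 2)⁻¹ := by
    rw [re_ofReal_div, hw, normSq_eq_norm_sq, norm_mul, Complex.norm_two]
    field_simp
    ring
  have hFw : ‖F (γ / w)‖ ≤ B * ‖2 * w‖ ^ ν := by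
    have := h3 (γ / w) (div_ne_zero hγ0 hw0) (by rw [div_div_cancel₀ hγ0, hw])
    rwa [hbase, inv_sq_rpow_neg_half h2w.le] at this
  calc ‖diskTransform F γ ν w‖ = ‖F (γ / w)‖ * Real.exp 1 * ‖2 * w‖ ^ (-ν) := by
        rw [norm_diskTransform, hw]
    _ ≤ B * ‖2 * w‖ ^ ν * Real.exp 1 * ‖2 * w‖ ^ (-ν) := by gcongr
    _ = Real.exp 1 * B := by
        rw [mul_right_comm, mul_assoc B, ← Real.rpow_add h2w, add_neg_cancel, Real.rpow_zero]
        ring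

theorem norm_diskTransform_le_of_one_le_re {A B : ℝ} (hA : 0 ≤ A) (hγ : 0 < γ) (hν : 0 ≤ ν)
    (hF : DifferentiableOn ℂ F {z : ℂ | 0 < z.re})
    (h1 : ∀ z : ℂ, 0 < z.re → ‖F z‖ ≤ A)
    (h2 : ∀ t : ℝ, 0 < t → t ≤ γ → ‖F t‖ ≤ A * Real.exp (-γ / t))
    (h3 : ∀ z : ℂ, z ≠ 0 → 1 ≤ ((γ : ℂ) / z).re → ‖F z‖ ≤ B * (z.re / (4 * γ)) ^ (-(ν / 2)))
    {w : ℂ} (hw : 1 ≤ w.re) : ‖diskTransform F γ ν w‖ ≤ Real.exp 1 * B := by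
  set g : ℂ → ℂ := fun ζ ↦ diskTransform F γ ν (1 + ζ)
  have hd : DiffContOnCl ℂ g {ζ | 0 < ζ.re} := by
    refine DifferentiableOn.diffContOnCl ?_
    rw [closure_setOfPred_lt_re]
    refine (differentiableOn_diskTransform hγ hF).comp (by fun_prop) fun ζ (hζ : 0 ≤ ζ.re) ↦ ?_
    change 0 < (1 + ζ).re
    simp only [add_re, one_re]
    linarith
  have hexp : ∃ c < (2 : ℝ), ∃ C,
      g =O[Bornology.cobounded ℂ ⊓ 𝓟 {ζ | 0 < ζ.re}] fun ζ ↦ Real.exp (C * ‖ζ‖ ^ c) := by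
    refine ⟨1, one_lt_two, 1, Asymptotics.IsBigO.of_bound (A * Real.exp 1) ?_⟩
    refine eventually_inf_principal.2 <| Eventually.of_forall fun ζ (hζ : 0 < ζ.re) ↦ ?_
    have hre : (1 + ζ).re = 1 + ζ.re := by simp
    calc ‖g ζ‖ ≤ ‖F (γ / (1 + ζ))‖ * Real.exp (1 + ζ).re :=
          norm_diskTransform_le hν (by rw [hre]; linarith)
      _ ≤ A * (Real.exp 1 * Real.exp ‖ζ‖) := by
          rw [hre, Real.exp_add]
          gcongr
          · exact h1 _ (re_ofReal_div_pos hγ (by rw [hre]; linarith))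
          · exact re_le_norm ζ
      _ = A * Real.exp 1 * ‖Real.exp (1 * ‖ζ‖ ^ (1 : ℝ))‖ := by
          rw [Real.rpow_one, one_mul, Real.norm_of_nonneg (Real.exp_pos _).le, mul_assoc]
  have hreal : IsBoundedUnder (· ≤ ·) atTop fun x : ℝ ↦ ‖g x‖ := by
    refine isBoundedUnder_of_eventually_le (a := A) ?_
    filter_upwards [eventually_ge_atTop 0] with x hx
    simpa [g] using norm_diskTransform_ofReal_le hγ hν h2 (x := 1 + x) (by linarith)
  have hline (y : ℝ) : ‖g (y * I)‖ ≤ Real.exp 1 * B :=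
    norm_diskTransform_le_of_re_eq_one hγ h3 (by simp)
  simpa [g] using PhragmenLindelof.right_half_plane_of_bounded_on_real hd hexp hreal hline
    (z := w - 1) (by simpa using hw)

theorem norm_eq_norm_diskTransform_div (hγ : 0 < γ) {z : ℂ} (hz : z ≠ 0) :
    ‖F z‖ = ‖diskTransform F γ ν (γ / z)‖ * (2 * γ / ‖z‖) ^ ν *
      Real.exp (-((γ : ℂ) / z).re) := by
  have hγ0 : (γ : ℂ) ≠ 0 := ofReal_ne_zero.2 hγ.ne'
  have hr : ‖2 * ((γ : ℂ) / z)‖ = 2 * γ / ‖z‖ := by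
    rw [norm_mul, norm_div, Complex.norm_two, norm_real, Real.norm_of_nonneg hγ.le, mul_div_assoc]
  have hr0 : 0 < 2 * γ / ‖z‖ := by have := norm_pos_iff.2 hz; positivity
  rw [norm_diskTransform, div_div_cancel₀ hγ0, hr, mul_assoc, mul_assoc, mul_assoc,
    ← mul_assoc (_ ^ (-ν)), ← Real.rpow_add hr0, neg_add_cancel, Real.rpow_zero, one_mul,
    ← Real.exp_add, add_neg_cancel, Real.exp_zero, mul_one]

end PhragmenLindelofDisk

open PhragmenLindelofDisk in
theorem phragmen_lindelof_disk_general
    (F : ℂ → ℂ) (A B γ ν : ℝ)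
    (hA : 0 < A) (hγ : 0 < γ) (hν : 0 < ν)
    (hF : DifferentiableOn ℂ F {z : ℂ | 0 < z.re})
    (h1 : ∀ z : ℂ, 0 < z.re → ‖F z‖ ≤ A)
    (h2 : ∀ t : ℝ, 0 < t → t ≤ γ → ‖F t‖ ≤ A * Real.exp (-γ / t))
    (h3 : ∀ z : ℂ, z ≠ 0 → 1 ≤ ((γ : ℂ) / z).re →
      ‖F z‖ ≤ B * (z.re / (4 * γ)) ^ (-(ν / 2))) :
    ∀ z : ℂ, z ≠ 0 → 1 ≤ ((γ : ℂ) / z).re →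
      ‖F z‖ ≤ Real.exp 1 * B * (2 * γ / ‖z‖) ^ ν * Real.exp (-(((γ : ℂ) / z).re)) := by
  intro z hz hzγ
  rw [norm_eq_norm_diskTransform_div (ν := ν) hγ hz]
  gcongr
  exact norm_diskTransform_le_of_one_le_re hA.le hγ hν.le hF h1 h2 h3 hzγ

/-- Let `F` be analytic on the open right half-plane `ℂ₊` and `A, B, γ, ν > 0`.  Assume
(i) `|F(z)| ≤ A` on `ℂ₊`; (ii) `|F(t)| ≤ A·e^{-γ/t}` for real `0 < t ≤ γ`;
(iii) `|F(z)| ≤ B·((Re z)/(4γ))^{-ν/2}` on the disk `𝒞_γ = {z ≠ 0 : Re(γ/z) ≥ 1}`.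
Then `|F(z)| ≤ e·B·(2γ/|z|)^ν·exp(-Re(γ/z))` for all `z ∈ 𝒞_γ`. -/
theorem phragmen_lindelof_disk
    (F : ℂ → ℂ) (A B γ ν : ℝ)
    (hA : 0 < A) (hB : 0 < B) (hγ : 0 < γ) (hν : 0 < ν)
    (hF : DifferentiableOn ℂ F {z : ℂ | 0 < z.re})
    (h1 : ∀ z : ℂ, 0 < z.re → ‖F z‖ ≤ A)
    (h2 : ∀ t : ℝ, 0 < t → t ≤ γ → ‖F t‖ ≤ A * Real.exp (-γ / t))
    (h3 : ∀ z : ℂ, z ≠ 0 → 1 ≤ ((γ : ℂ) / z).re →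
      ‖F z‖ ≤ B * (z.re / (4 * γ)) ^ (-(ν / 2))) :
    ∀ z : ℂ, z ≠ 0 → 1 ≤ ((γ : ℂ) / z).re →
      ‖F z‖ ≤ Real.exp 1 * B * (2 * γ / ‖z‖) ^ ν * Real.exp (-(((γ : ℂ) / z).re)) :=
  phragmen_lindelof_disk_general F A B γ ν hA hγ hν hF h1 h2 h3
end

section
/- Let g and F be analytic on ℂ₊. Assume |exp(g(z))| ≤ C·e^{c|z|^{-β}} for all z ∈ 𝒞_γ, with constants C, c, γ > 0 and 0 ≤ β < 1. Suppose F satisfies |F(z)| ≤ A on ℂ₊, |F(t)| ≤ A·e^{-γ/t} for real 0 < t ≤ γ, and |F(z)| ≤ B·((Re z)/(4γ))^{-ν/2}·exp(-Re g(z)) for some ν > 0 and all z ∈ 𝒞_γ. Then |F(z)| ≤ e·B·(2γ/|z|)^ν·exp(-Re g(z) - Re(γ/z)) for all z ∈ 𝒞_γ. -/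
/-!
The map `w ↦ γ / (w + 1)` carries the closed right half-plane onto `𝒞_γ` and the imaginary axis
onto the circle `Re (γ / z) = 1`. Pull `F z * exp (g z + γ / z) * (2γ / z) ^ (-ν)` back along it.
On the imaginary axis `Re z / (4γ) = ‖2γ / z‖⁻²`, so the third bound on `F` makes the pullback at
most `e * B` there. Elsewhere it grows at most exponentially (as `‖F‖ ≤ A`), and on the positive
real axis, where the decay `e^{-γ/t}` of `F` cancels the factor `exp (γ / z)`, at most like
`exp (D x ^ β)` with `β < 1`. A Phragmén–Lindelöf principle for such growth bounds the pullback
by `e * B` on the whole half-plane.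
-/

open Complex Filter Asymptotics Bornology Topology

theorem Complex.re_cpow_ofReal_nonneg {z : ℂ} (hz : 0 ≤ z.re) {t : ℝ} (ht₀ : 0 ≤ t)
    (ht₁ : t ≤ 1) : 0 ≤ (z ^ (t : ℂ)).re := by
  rw [cpow_ofReal_re]
  refine mul_nonneg (by positivity) (Real.cos_nonneg_of_neg_pi_div_two_le_of_le ?_ ?_) <;>
  · have := abs_le.1 (abs_arg_le_pi_div_two_iff.2 hz)
    nlinarith

theorem Real.tendsto_mul_rpow_sub_mul_rpow_atBot {β β' ε : ℝ} (D : ℝ) (hββ' : β < β')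
    (hβ' : 0 < β') (hε : 0 < ε) :
    Tendsto (fun x : ℝ => D * x ^ β - ε * x ^ β') atTop atBot := by
  have hsmall : Tendsto (fun x : ℝ => D * x ^ (-(β' - β)) - ε) atTop (𝓝 (D * 0 - ε)) :=
    ((tendsto_rpow_neg_atTop (sub_pos.2 hββ')).const_mul D).sub_const ε
  rw [mul_zero, zero_sub] at hsmall
  refine ((tendsto_rpow_atTop hβ').atTop_mul_neg (neg_lt_zero.2 hε) hsmall).congr' ?_
  filter_upwards [eventually_gt_atTop 0] with x hx
  rw [mul_sub, mul_left_comm, ← Real.rpow_add hx]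
  ring_nf

theorem Complex.norm_exp_neg_mul_cpow_le_one {u : ℂ} (hu : 0 ≤ u.re) {ε t : ℝ} (hε : 0 ≤ ε)
    (ht₀ : 0 ≤ t) (ht₁ : t ≤ 1) : ‖exp (-ε * u ^ (t : ℂ))‖ ≤ 1 := by
  rw [norm_exp, neg_mul, neg_re, re_ofReal_mul, Real.exp_le_one_iff, neg_nonpos]
  exact mul_nonneg hε (re_cpow_ofReal_nonneg hu ht₀ ht₁)

namespace PhragmenLindelof

variable {E : Type*} [NormedAddCommGroup E] [NormedSpace ℂ E] {f : ℂ → E} {C D β : ℝ} {z : ℂ}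

theorem right_half_plane_of_isBigO_exp_rpow_on_real (hd : DiffContOnCl ℂ f {z | 0 < z.re})
    (hexp : ∃ c < (2 : ℝ), ∃ B,
      f =O[cobounded ℂ ⊓ 𝓟 {z | 0 < z.re}] fun z => Real.exp (B * ‖z‖ ^ c))
    (hβ : β < 1) (hre : (fun x : ℝ => f x) =O[atTop] fun x => Real.exp (D * x ^ β))
    (him : ∀ x : ℝ, ‖f (x * I)‖ ≤ C) (hz : 0 ≤ z.re) : ‖f z‖ ≤ C := by
  -- Damp by `exp (-ε (z + 1) ^ β')` with `β < β' < 1`: this beats the growth on the real axis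
  -- and has modulus at most one on the closed half-plane; then let `ε → 0`.
  set β' : ℝ := (max β 0 + 1) / 2
  have hββ' : β < β' := by grind
  have hβ'₀ : 0 < β' := by positivity
  have hβ'₁ : β' ≤ 1 := by grind
  have hdamp {ε : ℝ} (hε : 0 ≤ ε) {w : ℂ} (hw : 0 ≤ w.re) :
      ‖exp (-ε * (w + 1) ^ (β' : ℂ))‖ ≤ 1 :=
    norm_exp_neg_mul_cpow_le_one (by rw [add_re, one_re]; linarith) hε hβ'₀.le hβ'₁
  suffices ∀ᶠ ε : ℝ in 𝓝[>] 0, ‖exp (-ε * (z + 1) ^ (β' : ℂ)) • f z‖ ≤ C by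
    refine le_of_tendsto (Tendsto.mono_left ?_ nhdsWithin_le_nhds) this
    exact Continuous.tendsto' (by fun_prop) _ _ (by simp)
  filter_upwards [self_mem_nhdsWithin] with ε (hε : 0 < ε)
  refine right_half_plane_of_tendsto_zero_on_real
    (f := fun w => exp (-ε * (w + 1) ^ (β' : ℂ)) • f w) ?_ ?_ ?_ (fun y => ?_) hz
  · refine DifferentiableOn.diffContOnCl (fun w hw => ?_) |>.smul hd
    replace hw : 0 ≤ w.re := by rwa [closure_setOfPred_lt_re] at hw
    refine (((differentiableAt_id.add_const 1).cpow_const ?_).const_mul _).cexp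
      |>.differentiableWithinAt
    exact Or.inl (by rw [id_eq, add_re, one_re]; linarith)
  · obtain ⟨c, hc, B, hO⟩ := hexp
    refine ⟨c, hc, B, .trans (.of_bound' ?_) hO⟩
    refine eventually_inf_principal.2 <| .of_forall fun w (hw : 0 < w.re) => ?_
    rw [norm_smul]
    exact mul_le_of_le_one_left (norm_nonneg _) (hdamp hε.le hw.le)
  · obtain ⟨K, hK⟩ := hre.bound
    have hdecay := (Real.tendsto_exp_atBot.comp
      (Real.tendsto_mul_rpow_sub_mul_rpow_atBot D hββ' hβ'₀ hε)).const_mul K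
    rw [mul_zero] at hdecay
    simp only [Function.comp_apply] at hdecay
    refine squeeze_zero_norm' ?_ hdecay
    filter_upwards [hK, eventually_ge_atTop 0] with x hfx hx
    have hx₁ : 0 ≤ x + 1 := by linarith
    rw [Real.norm_of_nonneg (Real.exp_nonneg _)] at hfx
    rw [norm_smul, show -(ε : ℂ) * ((x : ℂ) + 1) ^ (β' : ℂ) = ((-(ε * (x + 1) ^ β') : ℝ) : ℂ) by
      push_cast [ofReal_cpow hx₁]; ring, norm_exp_ofReal]
    calc Real.exp (-(ε * (x + 1) ^ β')) * ‖f x‖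
        ≤ Real.exp (-(ε * x ^ β')) * (K * Real.exp (D * x ^ β)) := by
          gcongr
          linarith
      _ = K * Real.exp (D * x ^ β - ε * x ^ β') := by
          rw [mul_left_comm, ← Real.exp_add]; ring_nf
  · rw [norm_smul]
    refine (mul_le_of_le_one_left (norm_nonneg _) (hdamp hε.le ?_)).trans (him y)
    simp

end PhragmenLindelof

theorem Complex.re_ofReal_div (r : ℝ) (u : ℂ) : ((r : ℂ) / u).re = r * u.re / normSq u := by
  rw [div_eq_mul_inv, re_ofReal_mul, inv_re, mul_div_assoc]

theorem Complex.re_ofReal_div_pos {r : ℝ} (hr : 0 < r) {u : ℂ} (hu : 0 < u.re) :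
    0 < ((r : ℂ) / u).re := by
  have : 0 < normSq u := normSq_pos.2 fun h => by simp [h] at hu
  rw [re_ofReal_div]
  positivity

/-- With `z = γ / (w + 1)`, this is `F z * exp (g z + γ / z) * (2γ / z) ^ (-ν)`. -/
noncomputable def diskPullback (F g : ℂ → ℂ) (γ ν : ℝ) (w : ℂ) : ℂ :=
  F (γ / (w + 1)) * exp (g (γ / (w + 1)) + (w + 1)) * (2 * (w + 1)) ^ ((-ν : ℝ) : ℂ)

section diskPullback

variable {F g : ℂ → ℂ} {A B C c γ ν β : ℝ}

theorem norm_diskPullback (w : ℂ) :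
    ‖diskPullback F g γ ν w‖ = ‖F (γ / (w + 1))‖ *
      Real.exp ((g (γ / (w + 1))).re + (w + 1).re) * (2 * ‖w + 1‖) ^ (-ν) := by
  rw [diskPullback, norm_mul, norm_mul, norm_exp, norm_cpow_real, norm_mul, add_re]
  norm_num

theorem diffContOnCl_diskPullback (hγ : 0 < γ) (hF : DifferentiableOn ℂ F {z | 0 < z.re})
    (hg : DifferentiableOn ℂ g {z | 0 < z.re}) :
    DiffContOnCl ℂ (diskPullback F g γ ν) {w | 0 < w.re} := by
  refine DifferentiableOn.diffContOnCl fun w hw => ?_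
  replace hw : 0 ≤ w.re := by rwa [closure_setOfPred_lt_re] at hw
  have hu : 0 < (w + 1).re := by rw [add_re, one_re]; linarith
  have hu0 : w + 1 ≠ 0 := fun h => by simp [h] at hu
  have hshift : DifferentiableAt ℂ (fun w : ℂ => w + 1) w := differentiableAt_id.add_const 1
  have hz : DifferentiableAt ℂ (fun w : ℂ => (γ : ℂ) / (w + 1)) w :=
    (differentiableAt_const _).div hshift hu0
  have hnhds : {z : ℂ | 0 < z.re} ∈ 𝓝 ((γ : ℂ) / (w + 1)) :=
    (isOpen_lt continuous_const continuous_re).mem_nhds (re_ofReal_div_pos hγ hu)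
  have hFz := (hF.differentiableAt hnhds).comp w hz
  have hgz := (hg.differentiableAt hnhds).comp w hz
  have hpow : DifferentiableAt ℂ (fun w : ℂ => (2 * (w + 1)) ^ ((-ν : ℝ) : ℂ)) w :=
    (hshift.const_mul 2).cpow_const (Or.inl (by simpa using hu))
  exact ((hFz.mul (hgz.add hshift).cexp).mul hpow).differentiableWithinAt

theorem norm_exp_apply_ofReal_div_le (hγ : 0 < γ)
    (hgC : ∀ z : ℂ, z ≠ 0 → 1 ≤ ((γ : ℂ) / z).re →
      ‖exp (g z)‖ ≤ C * Real.exp (c * ‖z‖ ^ (-β)))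
    {u : ℂ} (hu : 1 ≤ u.re) : ‖exp (g (γ / u))‖ ≤ C * Real.exp (c * (‖u‖ / γ) ^ β) := by
  have hu0 : u ≠ 0 := fun h => by simp [h] at hu; linarith
  have hγ0 : (γ : ℂ) ≠ 0 := ofReal_ne_zero.2 hγ.ne'
  convert hgC _ (div_ne_zero hγ0 hu0) (by rwa [div_div_cancel₀ hγ0]) using 4
  rw [norm_div, norm_real, Real.norm_of_nonneg hγ.le, Real.rpow_neg (by positivity),
    ← Real.inv_rpow (by positivity), inv_div]

theorem diskPullback_isBigO_cobounded (hγ : 0 < γ) (hc : 0 ≤ c) (hβ : β ≤ 1) (hν : 0 ≤ ν)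
    (hFA : ∀ z : ℂ, 0 < z.re → ‖F z‖ ≤ A)
    (hgC : ∀ z : ℂ, z ≠ 0 → 1 ≤ ((γ : ℂ) / z).re →
      ‖exp (g z)‖ ≤ C * Real.exp (c * ‖z‖ ^ (-β))) :
    diskPullback F g γ ν =O[cobounded ℂ ⊓ 𝓟 {w | 0 < w.re}]
      fun w => Real.exp ((1 + 2 * c / γ) * ‖w‖) := by
  refine .of_bound (A * C * Real.exp 1) ?_
  filter_upwards [(eventually_cobounded_le_norm (γ + 1)).filter_mono inf_le_left,
    eventually_inf_principal.2 (.of_forall fun w hw => hw)] with w hwγ (hw : 0 < w.re)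
  have hu : 1 ≤ (w + 1).re := by rw [add_re, one_re]; linarith
  have hu₁ : 1 ≤ ‖w + 1‖ := hu.trans (re_le_norm _)
  have hnorm_u : γ ≤ ‖w + 1‖ ∧ ‖w + 1‖ ≤ 2 * ‖w‖ := by
    have h₁ := norm_sub_le (w + 1) 1
    have h₂ := norm_add_le w 1
    rw [add_sub_cancel_right, norm_one] at h₁
    rw [norm_one] at h₂
    constructor <;> linarith
  have hgrowth : (‖w + 1‖ / γ) ^ β ≤ 2 * ‖w‖ / γ := calc
    (‖w + 1‖ / γ) ^ β ≤ ‖w + 1‖ / γ :=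
      Real.rpow_le_self_of_one_le ((one_le_div hγ).2 hnorm_u.1) hβ
    _ ≤ 2 * ‖w‖ / γ := by gcongr; exact hnorm_u.2
  have hre : (w + 1).re ≤ ‖w‖ + 1 := by simpa using re_le_norm w
  have hpow : (2 * ‖w + 1‖) ^ (-ν) ≤ 1 :=
    Real.rpow_le_one_of_one_le_of_nonpos (by linarith) (by linarith)
  have hFw := hFA _ (re_ofReal_div_pos hγ (by linarith))
  have hgw := norm_exp_apply_ofReal_div_le hγ hgC hu
  have hA : 0 ≤ A := (norm_nonneg _).trans hFw
  have hC : 0 ≤ C := nonneg_of_mul_nonneg_left ((norm_nonneg _).trans hgw) (Real.exp_pos _)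
  rw [norm_diskPullback, Real.exp_add, ← norm_exp, Real.norm_of_nonneg (Real.exp_nonneg _)]
  calc ‖F (γ / (w + 1))‖ * (‖exp (g (γ / (w + 1)))‖ * Real.exp (w + 1).re) *
        (2 * ‖w + 1‖) ^ (-ν)
      ≤ A * (C * Real.exp (c * (2 * ‖w‖ / γ)) * Real.exp (‖w‖ + 1)) * 1 := by
        gcongr
        exact hgw.trans (by gcongr)
    _ = A * C * Real.exp 1 * Real.exp ((1 + 2 * c / γ) * ‖w‖) := by
        rw [mul_one, mul_assoc C, ← Real.exp_add, mul_assoc (A * C), ← Real.exp_add, ← mul_assoc]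
        congr 2
        field_simp
        ring

theorem diskPullback_ofReal_isBigO_atTop (hγ : 0 < γ) (hc : 0 ≤ c) (hβ₀ : 0 ≤ β) (hβ₁ : β ≤ 1)
    (hν : 0 ≤ ν) (hFt : ∀ t : ℝ, 0 < t → t ≤ γ → ‖F t‖ ≤ A * Real.exp (-γ / t))
    (hgC : ∀ z : ℂ, z ≠ 0 → 1 ≤ ((γ : ℂ) / z).re →
      ‖exp (g z)‖ ≤ C * Real.exp (c * ‖z‖ ^ (-β))) :
    (fun x : ℝ => diskPullback F g γ ν x) =O[atTop] fun x => Real.exp (c / γ ^ β * x ^ β) := by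
  refine .of_bound (A * C * Real.exp (c / γ ^ β)) ?_
  filter_upwards [eventually_ge_atTop 0] with x hx
  have hx₁ : 0 < x + 1 := by linarith
  have hcast : (x : ℂ) + 1 = ((x + 1 : ℝ) : ℂ) := by push_cast; rfl
  have hFx : ‖F (γ / ((x : ℂ) + 1))‖ ≤ A * Real.exp (-(x + 1)) := by
    have := hFt (γ / (x + 1)) (by positivity) (div_le_self hγ.le (by linarith))
    rwa [neg_div, div_div_cancel₀ hγ.ne', ofReal_div, ← hcast] at this
  have hgx := norm_exp_apply_ofReal_div_le hγ hgC (u := (x : ℂ) + 1)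
    (by rw [add_re, ofReal_re, one_re]; linarith)
  have hA : 0 ≤ A := nonneg_of_mul_nonneg_left ((norm_nonneg _).trans hFx) (Real.exp_pos _)
  have hC : 0 ≤ C := nonneg_of_mul_nonneg_left ((norm_nonneg _).trans hgx) (Real.exp_pos _)
  have hsub : c * ((x + 1) / γ) ^ β ≤ c / γ ^ β * x ^ β + c / γ ^ β := calc
    c * ((x + 1) / γ) ^ β = c / γ ^ β * (x + 1) ^ β := by rw [Real.div_rpow hx₁.le hγ.le]; ring
    _ ≤ c / γ ^ β * (x ^ β + 1) := by
      gcongr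
      simpa using Real.rpow_add_le_add_rpow hx zero_le_one hβ₀ hβ₁
    _ = c / γ ^ β * x ^ β + c / γ ^ β := by ring
  have hpow : (2 * ‖(x : ℂ) + 1‖) ^ (-ν) ≤ 1 :=
    Real.rpow_le_one_of_one_le_of_nonpos
      (by rw [hcast, norm_real, Real.norm_of_nonneg hx₁.le]; linarith) (by linarith)
  rw [norm_diskPullback, Real.exp_add, ← norm_exp, Real.norm_of_nonneg (Real.exp_nonneg _)]
  rw [hcast, norm_real, Real.norm_of_nonneg hx₁.le, ← hcast] at hgx
  calc ‖F (γ / ((x : ℂ) + 1))‖ * (‖exp (g (γ / ((x : ℂ) + 1)))‖ * Real.exp ((x : ℂ) + 1).re) *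
        (2 * ‖(x : ℂ) + 1‖) ^ (-ν)
      ≤ A * Real.exp (-(x + 1)) *
          (C * Real.exp (c / γ ^ β * x ^ β + c / γ ^ β) * Real.exp (x + 1)) * 1 := by
        gcongr
        · exact hgx.trans (by gcongr)
        · simp
    _ = A * C * Real.exp (c / γ ^ β) * Real.exp (c / γ ^ β * x ^ β) := by
        rw [mul_one, Real.exp_add, Real.exp_neg]
        field_simp

theorem norm_diskPullback_ofReal_mul_I_le (hγ : 0 < γ)
    (hFB : ∀ z : ℂ, z ≠ 0 → 1 ≤ ((γ : ℂ) / z).re →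
      ‖F z‖ ≤ B * (z.re / (4 * γ)) ^ (-(ν / 2)) * Real.exp (-((g z).re))) (y : ℝ) :
    ‖diskPullback F g γ ν (y * I)‖ ≤ Real.exp 1 * B := by
  set u : ℂ := y * I + 1
  have hu : u.re = 1 := by simp [u]
  have hu0 : u ≠ 0 := fun h => by simp [h] at hu
  have hγ0 : (γ : ℂ) ≠ 0 := ofReal_ne_zero.2 hγ.ne'
  have hweight : (((γ : ℂ) / u).re / (4 * γ)) ^ (-(ν / 2)) = (2 * ‖u‖) ^ ν := by
    have : ((γ : ℂ) / u).re / (4 * γ) = ((2 * ‖u‖) ^ (2 : ℝ))⁻¹ := by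
      rw [re_ofReal_div, hu, normSq_eq_norm_sq, Real.rpow_two]
      field_simp
      ring
    rw [this, Real.inv_rpow (by positivity), ← Real.rpow_neg (by positivity),
      ← Real.rpow_mul (by positivity)]
    ring_nf
  have hF := hFB _ (div_ne_zero hγ0 hu0) (by rw [div_div_cancel₀ hγ0, hu])
  rw [hweight] at hF
  rw [norm_diskPullback]
  calc ‖F (γ / u)‖ * Real.exp ((g (γ / u)).re + u.re) * (2 * ‖u‖) ^ (-ν)
      ≤ B * (2 * ‖u‖) ^ ν * Real.exp (-(g (γ / u)).re) * Real.exp ((g (γ / u)).re + u.re) *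
          (2 * ‖u‖) ^ (-ν) := by gcongr
    _ = Real.exp 1 * B := by
        rw [hu, Real.rpow_neg (by positivity), Real.exp_add, Real.exp_neg]
        field_simp

end diskPullback

theorem phragmen_lindelof_disk_weighted_general
    (F g : ℂ → ℂ) (A B C c γ ν β : ℝ)
    (hc : 0 < c) (hγ : 0 < γ) (hν : 0 < ν)
    (hβ0 : 0 ≤ β) (hβ1 : β < 1)
    (hFanal : DifferentiableOn ℂ F {z : ℂ | 0 < z.re})
    (hganal : DifferentiableOn ℂ g {z : ℂ | 0 < z.re})
    (hg : ∀ z : ℂ, z ≠ 0 → 1 ≤ ((γ : ℂ) / z).re →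
      ‖Complex.exp (g z)‖ ≤ C * Real.exp (c * ‖z‖ ^ (-β)))
    (h1 : ∀ z : ℂ, 0 < z.re → ‖F z‖ ≤ A)
    (h2 : ∀ t : ℝ, 0 < t → t ≤ γ → ‖F t‖ ≤ A * Real.exp (-γ / t))
    (h3 : ∀ z : ℂ, z ≠ 0 → 1 ≤ ((γ : ℂ) / z).re →
      ‖F z‖ ≤ B * (z.re / (4 * γ)) ^ (-(ν / 2)) * Real.exp (-((g z).re))) :
    ∀ z : ℂ, z ≠ 0 → 1 ≤ ((γ : ℂ) / z).re →
      ‖F z‖ ≤ Real.exp 1 * B * (2 * γ / ‖z‖) ^ ν *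
        Real.exp (-((g z).re) - ((γ : ℂ) / z).re) := by
  intro z _ hzγ
  have hγ0 : (γ : ℂ) ≠ 0 := ofReal_ne_zero.2 hγ.ne'
  have hT := PhragmenLindelof.right_half_plane_of_isBigO_exp_rpow_on_real
    (diffContOnCl_diskPullback (ν := ν) hγ hFanal hganal)
    ⟨1, one_lt_two, _, by simpa only [Real.rpow_one] using
      diskPullback_isBigO_cobounded hγ hc.le hβ1.le hν.le h1 hg⟩
    hβ1 (diskPullback_ofReal_isBigO_atTop hγ hc.le hβ0 hβ1.le hν.le h2 hg)
    (norm_diskPullback_ofReal_mul_I_le hγ h3) (z := γ / z - 1) (by rw [sub_re, one_re]; linarith)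
  rw [norm_diskPullback, sub_add_cancel, div_div_cancel₀ hγ0, norm_div, norm_real,
    Real.norm_of_nonneg hγ.le, mul_div_assoc', mul_assoc, ← le_div_iff₀ (by positivity)] at hT
  refine hT.trans_eq ?_
  rw [Real.rpow_neg (by positivity), sub_eq_add_neg, ← neg_add, Real.exp_neg]
  field_simp

/-- Weighted Phragmén–Lindelöf lemma.  Let `g` and `F` be analytic on the open right
half-plane `ℂ₊`.  Assume `|exp(g(z))| ≤ C·e^{c|z|^{-β}}` on the disk
`𝒞_γ = {z ≠ 0 : Re(γ/z) ≥ 1}` with `C, c, γ > 0`, `0 ≤ β < 1`; that `|F(z)| ≤ A` on `ℂ₊`;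
`|F(t)| ≤ A·e^{-γ/t}` for real `0 < t ≤ γ`; and
`|F(z)| ≤ B·((Re z)/(4γ))^{-ν/2}·exp(-Re g(z))` on `𝒞_γ` for some `ν > 0`.  Then
`|F(z)| ≤ e·B·(2γ/|z|)^ν·exp(-Re g(z) - Re(γ/z))` for all `z ∈ 𝒞_γ`. -/
theorem phragmen_lindelof_disk_weighted
    (F g : ℂ → ℂ) (A B C c γ ν β : ℝ)
    (hA : 0 < A) (hB : 0 < B) (hC : 0 < C) (hc : 0 < c) (hγ : 0 < γ) (hν : 0 < ν)
    (hβ0 : 0 ≤ β) (hβ1 : β < 1)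
    (hFanal : DifferentiableOn ℂ F {z : ℂ | 0 < z.re})
    (hganal : DifferentiableOn ℂ g {z : ℂ | 0 < z.re})
    (hg : ∀ z : ℂ, z ≠ 0 → 1 ≤ ((γ : ℂ) / z).re →
      ‖Complex.exp (g z)‖ ≤ C * Real.exp (c * ‖z‖ ^ (-β)))
    (h1 : ∀ z : ℂ, 0 < z.re → ‖F z‖ ≤ A)
    (h2 : ∀ t : ℝ, 0 < t → t ≤ γ → ‖F t‖ ≤ A * Real.exp (-γ / t))
    (h3 : ∀ z : ℂ, z ≠ 0 → 1 ≤ ((γ : ℂ) / z).re →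
      ‖F z‖ ≤ B * (z.re / (4 * γ)) ^ (-(ν / 2)) * Real.exp (-((g z).re))) :
    ∀ z : ℂ, z ≠ 0 → 1 ≤ ((γ : ℂ) / z).re →
      ‖F z‖ ≤ Real.exp 1 * B * (2 * γ / ‖z‖) ^ ν *
        Real.exp (-((g z).re) - ((γ : ℂ) / z).re) :=
  phragmen_lindelof_disk_weighted_general F g A B C c γ ν β hc hγ hν hβ0 hβ1 hFanal hganal hg h1 h2
    h3
end

section
/- Let u be analytic on ℂ₊ with |u(ζ)e^ζ| ≤ B·e^{|ζ|} for all ζ ∈ ℂ₊, sup over the line Re ζ = ε of |u(ζ)e^ζ| at most B·e^ε, and sup over [ε, ∞) of |u(ζ)e^ζ| at most A·e^{aγ/ε} for every ε > 0 (with A, B, a, γ fixed positive constants). Then sup over {Re ζ > 0} of |u(ζ)e^ζ| is at most B. -/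
/-!
Put `F ζ = u ζ e^ζ` and fix `ε > 0`. On the half-plane `{Re ζ ≥ ε}`, `F` has order `1 < 2`, is
bounded by `B e^ε` on the boundary line and bounded on the real ray `[ε, ∞)`. Phragmén–Lindelöf on
the two quarter-planes cut out by that ray, and then on the half-plane itself, gives `‖F‖ ≤ B e^ε`
for `Re ζ ≥ ε`; letting `ε → 0` gives `‖F‖ ≤ B`.
-/

open Filter Set Complex Asymptotics Topology

variable {E : Type*} [NormedAddCommGroup E] [NormedSpace ℂ E] {f : ℂ → E} {M K C : ℝ}

theorem right_half_plane_of_exp_growth_of_bounded_on_real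
    (hd : DiffContOnCl ℂ f {z | 0 < z.re})
    (hgrowth : ∀ z : ℂ, 0 < z.re → ‖f z‖ ≤ M * Real.exp ‖z‖)
    (hre : ∀ x : ℝ, 0 ≤ x → ‖f x‖ ≤ K) (him : ∀ y : ℝ, ‖f (y * I)‖ ≤ C)
    {z : ℂ} (hz : 0 ≤ z.re) : ‖f z‖ ≤ C := by
  refine PhragmenLindelof.right_half_plane_of_bounded_on_real hd ⟨1, one_lt_two, 1, ?_⟩
    ⟨K, eventually_map.2 <| eventually_atTop.2 ⟨0, hre⟩⟩ him hz
  refine IsBigO.of_bound M <| eventually_inf_principal.2 <| Eventually.of_forall fun w hw => ?_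
  simpa [Real.abs_exp] using hgrowth w hw

theorem norm_le_on_re_ge_of_exp_growth_of_bounded_on_real {x₀ ε : ℝ} (hε : x₀ < ε)
    (hd : DifferentiableOn ℂ f {z | x₀ < z.re})
    (hgrowth : ∀ z : ℂ, x₀ < z.re → ‖f z‖ ≤ M * Real.exp ‖z‖)
    (hre : ∀ x : ℝ, ε ≤ x → ‖f x‖ ≤ K) (hline : ∀ z : ℂ, z.re = ε → ‖f z‖ ≤ C)
    {z : ℂ} (hz : ε ≤ z.re) : ‖f z‖ ≤ C := by
  have hmaps : MapsTo (· + (ε : ℂ)) {w : ℂ | 0 ≤ w.re} {z | x₀ < z.re} := fun w hw => by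
    simp only [mem_ofPred_eq, add_re, ofReal_re] at hw ⊢
    linarith
  have hg : DiffContOnCl ℂ (fun w => f (w + ε)) {w | 0 < w.re} := by
    refine DifferentiableOn.diffContOnCl ?_
    rw [show closure {w : ℂ | 0 < w.re} = {w | 0 ≤ w.re} by simp]
    exact hd.comp (differentiableOn_id.add_const _) hmaps
  have hM : 0 ≤ M := nonneg_of_mul_nonneg_left ((norm_nonneg _).trans
    (hgrowth ε (by simpa using hε))) (Real.exp_pos _)
  have hgrowth' : ∀ w : ℂ, 0 < w.re → ‖f (w + ε)‖ ≤ M * Real.exp |ε| * Real.exp ‖w‖ := by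
    intro w hw
    calc ‖f (w + ε)‖ ≤ M * Real.exp ‖w + ε‖ := hgrowth _ (hmaps hw.le)
      _ ≤ M * Real.exp (‖w‖ + |ε|) := by
        gcongr
        simpa using norm_add_le w (ε : ℂ)
      _ = M * Real.exp |ε| * Real.exp ‖w‖ := by rw [Real.exp_add]; ring
  simpa using right_half_plane_of_exp_growth_of_bounded_on_real hg hgrowth'
    (fun x hx => by exact_mod_cast hre (x + ε) (by linarith))
    (fun y => hline _ (by simp)) (z := z - ε) (by simpa using hz)

theorem phragmen_lindelof_key_step_general
    (u : ℂ → ℂ) (A B a γ : ℝ)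
    (hu : DifferentiableOn ℂ u {z : ℂ | 0 < z.re})
    (h1 : ∀ ζ : ℂ, 0 < ζ.re → ‖u ζ * Complex.exp ζ‖ ≤ B * Real.exp ‖ζ‖)
    (h2 : ∀ ε : ℝ, 0 < ε → ∀ ζ : ℂ, ζ.re = ε →
      ‖u ζ * Complex.exp ζ‖ ≤ B * Real.exp ε)
    (h3 : ∀ ε : ℝ, 0 < ε → ∀ t : ℝ, ε ≤ t →
      ‖u t * Complex.exp t‖ ≤ A * Real.exp (a * γ / ε)) :
    ∀ ζ : ℂ, 0 < ζ.re → ‖u ζ * Complex.exp ζ‖ ≤ B := by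
  intro ζ hζ
  have hF : DifferentiableOn ℂ (fun z => u z * Complex.exp z) {z : ℂ | 0 < z.re} :=
    hu.mul differentiable_exp.differentiableOn
  have hbound : ∀ᶠ ε in 𝓝[>] (0 : ℝ), ‖u ζ * Complex.exp ζ‖ ≤ B * Real.exp ε := by
    filter_upwards [Ioo_mem_nhdsGT hζ] with ε ⟨hε, hεζ⟩
    exact norm_le_on_re_ge_of_exp_growth_of_bounded_on_real hε hF h1 (h3 ε hε) (h2 ε hε) hεζ.le
  have hlim : Tendsto (fun ε => B * Real.exp ε) (𝓝[>] 0) (𝓝 B) := by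
    simpa using ((Real.continuous_exp.tendsto 0).const_mul B).mono_left nhdsWithin_le_nhds
  exact ge_of_tendsto hlim hbound

/-- Key Phragmén–Lindelöf step: if `u` is analytic on the right half-plane, `|u(ζ)e^ζ|` is
bounded by `B·e^{|ζ|}` on `{Re ζ > 0}`, by `B·e^ε` on each vertical line `Re ζ = ε`, and by
`A·e^{aγ/ε}` on each real ray `[ε, ∞)`, then `|u(ζ)e^ζ| ≤ B` on all of `{Re ζ > 0}`. -/
theorem phragmen_lindelof_key_step
    (u : ℂ → ℂ) (A B a γ : ℝ)
    (hA : 0 < A) (hB : 0 < B) (ha : 0 < a) (hγ : 0 < γ)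
    (hu : DifferentiableOn ℂ u {z : ℂ | 0 < z.re})
    (h1 : ∀ ζ : ℂ, 0 < ζ.re → ‖u ζ * Complex.exp ζ‖ ≤ B * Real.exp ‖ζ‖)
    (h2 : ∀ ε : ℝ, 0 < ε → ∀ ζ : ℂ, ζ.re = ε →
      ‖u ζ * Complex.exp ζ‖ ≤ B * Real.exp ε)
    (h3 : ∀ ε : ℝ, 0 < ε → ∀ t : ℝ, ε ≤ t →
      ‖u t * Complex.exp t‖ ≤ A * Real.exp (a * γ / ε)) :
    ∀ ζ : ℂ, 0 < ζ.re → ‖u ζ * Complex.exp ζ‖ ≤ B :=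
  phragmen_lindelof_key_step_general u A B a γ hu h1 h2 h3
end
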